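/- For every nonnegative integer n, p_{2n,μ}(1,-1) = (μ/(n+μ))·p_{2n,μ}(1,1), where for n = 0 and μ = 0 the quotient μ/(n+μ) is interpreted as 1. Equivalently, for n ≥ 1: Σ_{k=0}^{2n}(-1)^k C_μ(2n,k) = (μ/(n+μ))·Σ_{k=0}^{2n} C_μ(2n,k). -/

import Mathlib

open Finset

/-- The μ-deformed factorial function γ_μ. -/
noncomputable def gammaMu (μ : ℝ) : ℕ → ℝ
  | 0 => 1
  | n + 1 => ((n + 1 : ℝ) + 2 * μ * (if Odd (n + 1) then 1 else 0)) * gammaMu μ n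

/-- The μ-deformed binomial coefficient C_μ(n,k), zero outside 0 ≤ k ≤ n. -/
noncomputable def binomMu (μ : ℝ) (n : ℕ) (k : ℤ) : ℝ :=
  if 0 ≤ k ∧ k ≤ (n : ℤ) then gammaMu μ n / (gammaMu μ (n - k.toNat) * gammaMu μ k.toNat) else 0

/-- The n-th μ-deformed binomial polynomial p_{n,μ}(x,y). -/
noncomputable def pMu (μ : ℝ) (n : ℕ) (x y : ℂ) : ℂ :=
  ∑ k ∈ Finset.range (n + 1), (binomMu μ n k : ℂ) * x ^ k * y ^ (n - k)

/-- The μ-deformed exponential function. -/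
noncomputable def expMu (μ : ℝ) (z : ℂ) : ℂ :=
  ∑' n : ℕ, z ^ n / (gammaMu μ n : ℂ)

/-- The Bessel function of the first kind of order ν, for positive real argument. -/
noncomputable def besselJ (ν x : ℝ) : ℝ :=
  ∑' m : ℕ, ((-1) ^ m / (Nat.factorial m * Real.Gamma (ν + m + 1))) * (x / 2) ^ ((2 * m : ℝ) + ν)

/-! Clearing the γ-denominators gives the deformed Pascal rule
`(N + 2μ(θ(k) + θ(N-k))) C_μ(N, k) = (N + 2μθ(N)) (C_μ(N-1, k) + C_μ(N-1, k-1))`.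
For `N = 2n` the indices `k` and `2n - k` have the same parity, so it reads
`(n + 2μθ(k)) C_μ(2n, k) = n (C_μ(2n-1, k) + C_μ(2n-1, k-1))`. Since `θ(k)² = θ(k)` we have
`(-1)^k (n + 2μθ(k)) = (n + μ)(-1)^k - μ`, and against `(-1)^k` the right-hand side of the
Pascal rule telescopes to zero. Hence `(n + μ) ∑ (-1)^k C_μ(2n, k) = μ ∑ C_μ(2n, k)`. -/

noncomputable def oddIndicator (n : ℕ) : ℝ := if Odd n then 1 else 0

lemma oddIndicator_eq_zero_or_one (n : ℕ) : oddIndicator n = 0 ∨ oddIndicator n = 1 := by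
  unfold oddIndicator; split_ifs <;> simp

lemma oddIndicator_sub_of_even {n k : ℕ} (hn : Even n) (hk : k ≤ n) :
    oddIndicator (n - k) = oddIndicator k := by
  have : Odd (n - k) ↔ Odd k := by
    obtain ⟨m, rfl⟩ := hn
    rw [Nat.odd_iff, Nat.odd_iff]; omega
  simp only [oddIndicator, this]

lemma gammaMu_succ (μ : ℝ) (n : ℕ) :
    gammaMu μ (n + 1) = ((n : ℝ) + 1 + 2 * μ * oddIndicator (n + 1)) * gammaMu μ n :=
  rfl

lemma gammaMu_succ_factor_pos {μ : ℝ} (hμ : -(1 / 2 : ℝ) < μ) (n : ℕ) :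
    0 < (n : ℝ) + 1 + 2 * μ * oddIndicator (n + 1) := by
  have := n.cast_nonneg (α := ℝ)
  rcases oddIndicator_eq_zero_or_one (n + 1) with h | h <;> rw [h] <;> linarith

lemma gammaMu_pos {μ : ℝ} (hμ : -(1 / 2 : ℝ) < μ) (n : ℕ) : 0 < gammaMu μ n := by
  induction n with
  | zero => exact one_pos
  | succ n ih => rw [gammaMu_succ]; exact mul_pos (gammaMu_succ_factor_pos hμ n) ih

lemma binomMu_natCast {μ : ℝ} {n k : ℕ} (h : k ≤ n) :
    binomMu μ n k = gammaMu μ n / (gammaMu μ (n - k) * gammaMu μ k) := by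
  rw [binomMu, if_pos ⟨k.cast_nonneg, by exact_mod_cast h⟩, Int.toNat_natCast]

lemma binomMu_of_lt {μ : ℝ} {n : ℕ} {k : ℤ} (h : (n : ℤ) < k) : binomMu μ n k = 0 :=
  if_neg fun hk ↦ by omega

lemma binomMu_of_neg {μ : ℝ} {n : ℕ} {k : ℤ} (h : k < 0) : binomMu μ n k = 0 :=
  if_neg fun hk ↦ by omega

lemma binomMu_zero_right {μ : ℝ} (hμ : -(1 / 2 : ℝ) < μ) (n : ℕ) : binomMu μ n 0 = 1 := by
  rw [← Nat.cast_zero, binomMu_natCast n.zero_le, Nat.sub_zero, gammaMu, mul_one,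
    div_self (gammaMu_pos hμ n).ne']

lemma binomMu_self {μ : ℝ} (hμ : -(1 / 2 : ℝ) < μ) (n : ℕ) : binomMu μ n n = 1 := by
  rw [binomMu_natCast le_rfl, Nat.sub_self, gammaMu, one_mul, div_self (gammaMu_pos hμ n).ne']

lemma binomMu_succ_pascal {μ : ℝ} (hμ : -(1 / 2 : ℝ) < μ) (n k : ℕ) :
    ((n : ℝ) + 1 + 2 * μ * (oddIndicator k + oddIndicator (n + 1 - k))) * binomMu μ (n + 1) k =
      ((n : ℝ) + 1 + 2 * μ * oddIndicator (n + 1)) *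
        (binomMu μ n k + binomMu μ n (k - 1)) := by
  rcases k with _ | j
  · simp [binomMu_zero_right hμ, binomMu_of_neg, oddIndicator]
  rcases lt_trichotomy j n with hj | rfl | hj
  · obtain ⟨r, rfl⟩ : ∃ r, n = j + r + 1 := ⟨n - j - 1, by omega⟩
    have hγ₁ := gammaMu_succ μ (j + r + 1)
    have hγ₂ := gammaMu_succ μ r
    have hγ₃ := gammaMu_succ μ j
    have := gammaMu_succ_factor_pos hμ r
    have := gammaMu_succ_factor_pos hμ j
    have := gammaMu_pos hμ r
    have := gammaMu_pos hμ j
    rw [show ((j + 1 : ℕ) : ℤ) - 1 = j by push_cast; ring, binomMu_natCast (by omega),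
      binomMu_natCast (by omega), binomMu_natCast (by omega),
      show j + r + 1 + 1 - (j + 1) = r + 1 by omega, show j + r + 1 - (j + 1) = r by omega,
      show j + r + 1 - j = r + 1 by omega, hγ₁, hγ₂, hγ₃]
    field_simp
    push_cast
    ring
  · rw [Nat.sub_self, show ((j + 1 : ℕ) : ℤ) - 1 = j by push_cast; ring, binomMu_self hμ,
      binomMu_self hμ, binomMu_of_lt (by omega)]
    simp [oddIndicator]
  · rw [binomMu_of_lt (by omega), binomMu_of_lt (by omega), binomMu_of_lt (by omega)]
    ring

lemma neg_one_pow_eq_one_sub_two_mul_oddIndicator (k : ℕ) :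
    (-1 : ℝ) ^ k = 1 - 2 * oddIndicator k := by
  rcases k.even_or_odd with hk | hk
  · simp [oddIndicator, hk.neg_one_pow, Nat.not_odd_iff_even.mpr hk]
  · rw [hk.neg_one_pow, oddIndicator, if_pos hk]; norm_num

lemma sum_range_neg_one_pow_mul_binomMu_add (μ : ℝ) (n : ℕ) :
    ∑ k ∈ range (n + 2), (-1 : ℝ) ^ k * (binomMu μ n k + binomMu μ n (k - 1)) = 0 := by
  let f (k : ℕ) : ℝ := (-1) ^ k * binomMu μ n (k - 1)
  have hf : ∀ k ∈ range (n + 2),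
      (-1 : ℝ) ^ k * (binomMu μ n k + binomMu μ n (k - 1)) = f k - f (k + 1) := by
    intro k _
    simp only [f, pow_succ, Nat.cast_succ, add_sub_cancel_right]
    ring
  rw [sum_congr rfl hf, sum_range_sub']
  simp only [f, binomMu_of_neg (show ((0 : ℕ) : ℤ) - 1 < 0 by omega),
    binomMu_of_lt (show (n : ℤ) < ((n + 2 : ℕ) : ℤ) - 1 by omega)]
  ring

lemma binomMu_two_mul_alt_sum {μ : ℝ} (hμ : -(1 / 2 : ℝ) < μ) (n : ℕ) :
    ((n : ℝ) + μ) * ∑ k ∈ range (2 * n + 1), (-1 : ℝ) ^ k * binomMu μ (2 * n) k =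
      μ * ∑ k ∈ range (2 * n + 1), binomMu μ (2 * n) k := by
  rcases n with _ | m
  · simp [binomMu, gammaMu]
  set N := 2 * m + 1
  rw [show 2 * (m + 1) = N + 1 by omega, ← sub_eq_zero, mul_sum, mul_sum, ← sum_sub_distrib]
  have hterm : ∀ k ∈ range (N + 2),
      (((m + 1 : ℕ) : ℝ) + μ) * ((-1) ^ k * binomMu μ (N + 1) k) - μ * binomMu μ (N + 1) k =
        ((m : ℝ) + 1) * ((-1) ^ k * (binomMu μ N k + binomMu μ N (k - 1))) := by
    intro k hk
    have hpascal := binomMu_succ_pascal hμ N k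
    rw [oddIndicator_sub_of_even (by rw [Nat.even_iff]; omega) (by simp at hk; omega),
      show oddIndicator (N + 1) = 0 by simp [N, oddIndicator, parity_simps]] at hpascal
    have hidem : oddIndicator k * (oddIndicator k - 1) = 0 := by
      rcases oddIndicator_eq_zero_or_one k with h | h <;> simp [h]
    rw [neg_one_pow_eq_one_sub_two_mul_oddIndicator]
    push_cast [N] at hpascal ⊢
    linear_combination (1 / 2 - oddIndicator k) * hpascal +
      4 * μ * binomMu μ (N + 1) k * hidem
  rw [sum_congr rfl hterm, ← mul_sum, sum_range_neg_one_pow_mul_binomMu_add, mul_zero]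

lemma pMu_one_one (μ : ℝ) (n : ℕ) :
    pMu μ n 1 1 = ↑(∑ k ∈ range (n + 1), binomMu μ n k) := by
  simp [pMu]

lemma pMu_one_neg_one_of_even (μ : ℝ) {n : ℕ} (hn : Even n) :
    pMu μ n 1 (-1) = ↑(∑ k ∈ range (n + 1), (-1 : ℝ) ^ k * binomMu μ n k) := by
  push_cast
  refine sum_congr rfl fun k hk ↦ ?_
  obtain ⟨r, rfl⟩ := hn
  have hk : k ≤ r + r := Nat.lt_succ_iff.mp (mem_range.mp hk)
  rw [one_pow, mul_one, mul_comm, neg_one_pow_eq_pow_mod_two, neg_one_pow_eq_pow_mod_two (n := k),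
    show (r + r - k) % 2 = k % 2 by omega]

theorem pMu_alt_sum_ratio (μ : ℝ) (hμ : -(1/2 : ℝ) < μ) (n : ℕ) :
    pMu μ (2 * n) 1 (-1) =
      ((if n = 0 ∧ μ = 0 then 1 else μ / (n + μ) : ℝ) : ℂ) * pMu μ (2 * n) 1 1 := by
  split_ifs with h
  · obtain ⟨rfl, rfl⟩ := h
    simp [pMu, binomMu, gammaMu]
  have hne : (n : ℝ) + μ ≠ 0 := by
    rcases n with _ | m
    · simpa using h
    · push_cast; linarith [m.cast_nonneg (α := ℝ)]
  rw [pMu_one_neg_one_of_even μ (even_two_mul n), pMu_one_one, ← Complex.ofReal_mul,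
    div_mul_eq_mul_div, ← binomMu_two_mul_alt_sum hμ, mul_div_cancel_left₀ _ hne]
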